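/- arXiv:1709.05575 — 3 statements merged into one kernel-verified Lean document; each statement's English description precedes it below -/
import Mathlib

section
/- Suppose V is smooth and 1/2-periodic and the smooth Bloch eigenfunction families χ_±(·;p) at a trivial crossing at p = π arise by band folding, i.e. χ_+(z;p) and ∂_p χ_+(z;p) are 1/2-periodic in z, and χ_−(z;p) = e^{−2πiz} conj(χ_+(z;p)). Then the inter-band coupling coefficient vanishes: ⟨χ_−(·;π), ∂_p χ_+(·;π)⟩_{L²[0,1]} = 0. -/
open MeasureTheory

/-- at a trivial band crossing (1/2-periodic potential, bands related by
folding), the inter-band coupling coefficient `⟨χ₋(·;π), ∂ₚχ₊(·;π)⟩_{L²[0,1]}` vanishes.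
Here `χp = χ₊(·;π)`, `dχp = ∂ₚχ₊(·;π)` are 1/2-periodic in `z` and
`χ₋(z;π) = e^{−2πiz} conj(χ₊(z;π))`. -/
theorem coupling_coefficient_vanishes_trivial_crossing
    (V : ℝ → ℝ) (hV : ContDiff ℝ (⊤ : ℕ∞) V) (hVper : ∀ z, V (z + 1/2) = V z)
    (χp dχp χm : ℝ → ℂ)
    (hχpper : ∀ z, χp (z + 1/2) = χp z)
    (hdχpper : ∀ z, dχp (z + 1/2) = dχp z)
    (hint : IntervalIntegrable (fun z => χp z * dχp z) volume 0 1)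
    (hχm : ∀ z : ℝ, χm z = Complex.exp (-(2 * Real.pi * Complex.I * z)) * (starRingEnd ℂ) (χp z)) :
    (∫ z in (0:ℝ)..1, (starRingEnd ℂ) (χm z) * dχp z) = 0 := by
  set f : ℝ → ℂ := fun z => χp z * dχp z with hf
  have hfper : ∀ z, f (z + 1/2) = f z := by
    intro z; show χp (z + 1/2) * dχp (z + 1/2) = χp z * dχp z; rw [hχpper, hdχpper]
  set g : ℝ → ℂ := fun z => Complex.exp (2 * Real.pi * Complex.I * z) * f z with hg
  have hconj : ∀ z : ℝ, (starRingEnd ℂ) (χm z) * dχp z = g z := by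
    intro z
    rw [hχm z]
    simp only [map_mul, ← Complex.exp_conj, RingHom.id_apply, Complex.conj_conj]
    have : (starRingEnd ℂ) (-(2 * Real.pi * Complex.I * z)) = 2 * Real.pi * Complex.I * z := by
      simp only [map_neg, map_mul, Complex.conj_I, Complex.conj_ofReal, map_ofNat]
      ring
    rw [this]
    simp [hg, hf]; ring
  have hgint : IntervalIntegrable g volume 0 1 := by
    apply hint.continuousOn_mul
    exact (Complex.continuous_exp.comp (by continuity)).continuousOn
  have hgint1 : IntervalIntegrable g volume 0 (1/2) :=
    hgint.mono_set (by rw [Set.uIcc_of_le (by norm_num : (0:ℝ) ≤ 1/2), Set.uIcc_of_le (by norm_num : (0:ℝ) ≤ 1)]; exact Set.Icc_subset_Icc (le_refl _) (by norm_num))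
  have hgint2 : IntervalIntegrable g volume (1/2) 1 :=
    hgint.mono_set (by rw [Set.uIcc_of_le (by norm_num : (1/2:ℝ) ≤ 1), Set.uIcc_of_le (by norm_num : (0:ℝ) ≤ 1)]; exact Set.Icc_subset_Icc (by norm_num) (le_refl _))
  have hshift : ∀ z : ℝ, g (z + 1/2) = -g z := by
    intro z
    simp only [hg, hfper z]
    have : (2 : ℂ) * Real.pi * Complex.I * (↑(z + 1/2)) =
        2 * Real.pi * Complex.I * z + Real.pi * Complex.I := by
      push_cast; ring
    rw [this, Complex.exp_add, Complex.exp_pi_mul_I]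
    ring
  calc (∫ z in (0:ℝ)..1, (starRingEnd ℂ) (χm z) * dχp z)
      = ∫ z in (0:ℝ)..1, g z := by simp only [hconj]
    _ = (∫ z in (0:ℝ)..(1/2), g z) + ∫ z in (1/2:ℝ)..1, g z :=
        (intervalIntegral.integral_add_adjacent_intervals hgint1 hgint2).symm
    _ = 0 := by
        have : (∫ z in (1/2:ℝ)..1, g z) = ∫ z in (0:ℝ)..(1/2), g (z + 1/2) := by
          rw [intervalIntegral.integral_comp_add_right]
          norm_num
        rw [this]
        simp only [hshift]
        rw [intervalIntegral.integral_neg]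
        ring
end

section
/- Consequently, the 'excited' envelope a⁰_−(y) := c ∫_ℝ e^{iβγτ²/2} a(y − γτ) dτ, where c = ∂_q W(q*) ⟨χ_−(·;p*), ∂_p χ_+(·;p*)⟩, β = ∂_q W(q*) > 0, and γ = ∂_p E_+(p*) − ∂_p E_−(p*) > 0, satisfies ‖a⁰_−‖²_{L²} = (2π |∂_q W(q*)| |⟨χ_−(·;p*), ∂_p χ_+(·;p*)⟩|² / |∂_p E_+(p*) − ∂_p E_−(p*)|) · ‖a‖²_{L²}. -/
open MeasureTheory Complex Real SchwartzMap
open scoped FourierTransform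


noncomputable def chirp (c : ℝ) : ℝ → ℂ := fun x ↦ Complex.exp (Complex.I * (c * x^2))

lemma chirp_eq (c x : ℝ) : chirp c x = Complex.exp (((c * x^2 : ℝ):ℂ) * Complex.I) := by
  rw [chirp]; push_cast; ring_nf

lemma chirp_norm (c : ℝ) (x : ℝ) : ‖chirp c x‖ = 1 := by
  rw [chirp_eq, Complex.norm_exp_ofReal_mul_I]

lemma chirp_hasDerivAt (c : ℝ) (x : ℝ) :
    HasDerivAt (chirp c) (Complex.I * (2*c*x) * chirp c x) x := by
  have h1 : HasDerivAt (fun x : ℝ ↦ (x:ℂ)) 1 x := by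
    simpa using (hasDerivAt_id x).ofReal_comp
  have h1' : HasDerivAt (fun x : ℝ ↦ ((x:ℂ))^2) (2*(x:ℂ)) x := by
    simpa [sq, two_mul] using h1.fun_mul h1
  have h2 : HasDerivAt (fun x : ℝ ↦ (Complex.I * ((c:ℂ) * (x:ℂ)^2))) (Complex.I * (2*c*x)) x := by
    have := (h1'.const_mul ((c:ℂ))).const_mul Complex.I
    convert this using 1
    · rfl
    · ring
  have := h2.cexp
  rw [show Complex.I * (2*(c:ℂ)*x) * chirp c x = Complex.exp (Complex.I * (c * x^2)) * (Complex.I * (2*c*x)) by rw [chirp]; ring]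
  exact this

lemma chirp_contDiff (c : ℝ) : ContDiff ℝ (⊤ : ℕ∞) (chirp c) := by
  apply Complex.contDiff_exp.comp
  exact (contDiff_const.mul ((contDiff_const.mul ((Complex.ofRealCLM.contDiff).pow 2))))




lemma chirp_iteratedDeriv (c : ℝ) (n : ℕ) :
    ∃ p : Polynomial ℂ, ∀ x : ℝ, iteratedDeriv n (chirp c) x = p.eval (x:ℂ) * chirp c x := by
  induction n with
  | zero => exact ⟨1, fun x ↦ by simp⟩
  | succ n ih =>
    obtain ⟨p, hp⟩ := ih
    refine ⟨p.derivative + Polynomial.C (Complex.I * (2*c)) * Polynomial.X * p, fun x ↦ ?_⟩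
    rw [iteratedDeriv_succ]
    have hfun : iteratedDeriv n (chirp c) = fun x : ℝ ↦ p.eval (x:ℂ) * chirp c x := funext hp
    rw [hfun]
    have h1 : HasDerivAt (fun x : ℝ ↦ (x:ℂ)) 1 x := by
      simpa using (hasDerivAt_id x).ofReal_comp
    have hpoly : HasDerivAt (fun x : ℝ ↦ p.eval (x:ℂ)) (p.derivative.eval (x:ℂ)) x := by
      simpa using (p.hasDerivAt (x:ℂ)).comp_ofReal
    have := hpoly.mul (chirp_hasDerivAt c x)
    rw [show (fun x : ℝ ↦ p.eval (x:ℂ) * chirp c x) = (fun x : ℝ ↦ p.eval (x:ℂ)) * chirp c from rfl, this.deriv]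
    simp only [Polynomial.eval_add, Polynomial.eval_mul, Polynomial.eval_C, Polynomial.eval_X]
    push_cast
    ring

lemma poly_bound (p : Polynomial ℂ) :
    ∃ C : ℝ, 0 ≤ C ∧ ∀ x : ℝ, ‖p.eval (x:ℂ)‖ ≤ C * (1 + ‖x‖) ^ p.natDegree := by
  refine ⟨∑ i ∈ Finset.range (p.natDegree + 1), ‖p.coeff i‖,
    Finset.sum_nonneg fun _ _ ↦ norm_nonneg _, fun x ↦ ?_⟩
  rw [Polynomial.eval_eq_sum_range]
  refine (norm_sum_le _ _).trans ?_
  rw [Finset.sum_mul]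
  refine Finset.sum_le_sum fun i hi ↦ ?_
  rw [norm_mul, norm_pow]
  refine mul_le_mul_of_nonneg_left ?_ (norm_nonneg _)
  calc ‖(x:ℂ)‖ ^ i ≤ (1 + ‖x‖) ^ i := by
        refine pow_le_pow_left₀ (norm_nonneg _) ?_ i
        rw [Complex.norm_real]
        linarith [norm_nonneg x]
    _ ≤ (1 + ‖x‖) ^ p.natDegree := by
        refine pow_le_pow_right₀ (by linarith [norm_nonneg x]) ?_
        exact Nat.lt_succ_iff.mp (Finset.mem_range.mp hi)

lemma chirp_temperate (c : ℝ) : Function.HasTemperateGrowth (chirp c) := by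
  refine ⟨(chirp_contDiff c).of_le (by simp), fun n ↦ ?_⟩
  obtain ⟨p, hp⟩ := chirp_iteratedDeriv c n
  obtain ⟨C, hC0, hC⟩ := poly_bound p
  refine ⟨p.natDegree, C, fun x ↦ ?_⟩
  rw [norm_iteratedFDeriv_eq_norm_iteratedDeriv, hp x, norm_mul, chirp_norm, mul_one]
  exact hC x

lemma innerl_flip : (innerₗ ℝ).flip = innerₗ ℝ := by
  apply LinearMap.ext; intro x; apply LinearMap.ext; intro y
  simpa using real_inner_comm x y

lemma conj_exp_real_mul_I (r : ℝ) :
    (starRingEnd ℂ) (Complex.exp ((r:ℂ) * Complex.I)) = Complex.exp (((-r : ℝ):ℂ) * Complex.I) := by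
  rw [← Complex.exp_conj, map_mul, Complex.conj_ofReal, Complex.conj_I]
  push_cast
  ring_nf

lemma fourier_conj (f : ℝ → ℂ) (x : ℝ) :
    𝓕 (fun ξ ↦ (starRingEnd ℂ) (f ξ)) x = (starRingEnd ℂ) (𝓕⁻ f x) := by
  rw [Real.fourier_eq', Real.fourierInv_eq', ← integral_conj]
  congr 1
  ext ξ
  rw [smul_eq_mul, smul_eq_mul, map_mul, conj_exp_real_mul_I]
  norm_num

lemma plancherel_schwartz (h : SchwartzMap ℝ ℂ) :
    ∫ ξ : ℝ, ‖𝓕 ⇑h ξ‖^2 = ∫ x : ℝ, ‖h x‖^2 := by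
  have hFh : ⇑(fourierTransformCLM ℝ h) = 𝓕 ⇑h := by
    ext x; simp [SchwartzMap.fourier_coe]
  have hFh_int : Integrable (𝓕 ⇑h) := by
    rw [← hFh]; exact (fourierTransformCLM ℝ h).integrable
  set g : ℝ → ℂ := fun ξ ↦ (starRingEnd ℂ) (𝓕 ⇑h ξ) with hg
  have hg_int : Integrable g := by
    simpa [hg] using (Complex.conjCLE.toContinuousLinearMap.integrable_comp hFh_int)
  have hL : Continuous fun p : ℝ × ℝ ↦ (innerₗ ℝ) p.1 p.2 := continuous_inner
  have key := VectorFourier.integral_fourierIntegral_smul_eq_flip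
    (e := Real.fourierChar) (L := innerₗ ℝ) (μ := volume) (ν := volume)
    Real.continuous_fourierChar hL h.integrable hg_int
  rw [innerl_flip] at key
  have hgf : ∀ x, VectorFourier.fourierIntegral Real.fourierChar volume (innerₗ ℝ) g x
      = (starRingEnd ℂ) (h x) := by
    intro x
    have h0 : VectorFourier.fourierIntegral Real.fourierChar volume (innerₗ ℝ) g x = 𝓕 g x := rfl
    rw [h0, hg, fourier_conj (𝓕 ⇑h) x]
    congr 1
    exact h.integrable.fourierInv_fourier_eq hFh_int (h.continuous.continuousAt)
  have lhs_eq : ∫ ξ : ℝ, (VectorFourier.fourierIntegral Real.fourierChar volume (innerₗ ℝ)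
      (⇑h) ξ) • g ξ = ∫ ξ : ℝ, ((‖𝓕 ⇑h ξ‖^2 : ℝ) : ℂ) := by
    congr 1; ext ξ
    have h0 : VectorFourier.fourierIntegral Real.fourierChar volume (innerₗ ℝ) (⇑h) ξ
        = 𝓕 ⇑h ξ := rfl
    rw [h0, smul_eq_mul, hg, Complex.mul_conj, Complex.normSq_eq_norm_sq]
  have rhs_eq : ∫ x : ℝ, h x • (VectorFourier.fourierIntegral Real.fourierChar volume (innerₗ ℝ)
      g x) = ∫ x : ℝ, ((‖h x‖^2 : ℝ) : ℂ) := by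
    congr 1; ext x
    rw [hgf x, smul_eq_mul, Complex.mul_conj, Complex.normSq_eq_norm_sq]
  rw [lhs_eq, rhs_eq] at key
  have cast1 : ∀ f : ℝ → ℝ, ∫ x : ℝ, ((f x : ℝ) : ℂ) = ((∫ x : ℝ, f x : ℝ) : ℂ) :=
    fun f ↦ integral_ofReal
  rw [cast1, cast1] at key
  exact_mod_cast key



/-- Landau–Zener norm identity for the excited envelope
`a⁰₋(y) = c ∫ e^{iβγτ²/2} a(y − γτ) dτ` with `c = ∂_qW(q*)⟨χ₋, ∂ₚχ₊⟩`, `β = ∂_qW(q*) > 0`,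
`γ = ∂ₚE₊(p*) − ∂ₚE₋(p*) > 0`:
`‖a⁰₋‖² = (2π|∂_qW(q*)| |⟨χ₋, ∂ₚχ₊⟩|² / |∂ₚE₊(p*) − ∂ₚE₋(p*)|) ‖a‖²`. -/
theorem excited_envelope_norm
    (a : SchwartzMap ℝ ℂ) (dqW dEp dEm : ℝ) (hβ : 0 < dqW) (hγ : 0 < dEp - dEm)
    (κ : ℂ) :
    (∫ y : ℝ,
        ‖((dqW : ℂ) * κ) *
            ∫ τ : ℝ, Complex.exp (Complex.I * ((dqW * (dEp - dEm) * τ^2 / 2 : ℝ) : ℂ)) *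
              a (y - (dEp - dEm) * τ)‖^2)
      = (2 * Real.pi * |dqW| * ‖κ‖^2 / |dEp - dEm|) * ∫ y : ℝ, ‖a y‖^2 := by
  have hπ := Real.pi_pos
  set γ : ℝ := dEp - dEm with hγdef
  have hγ0 : γ ≠ 0 := ne_of_gt hγ
  set u : ℝ := dqW / (2 * γ) with hudef
  set h : SchwartzMap ℝ ℂ :=
    SchwartzMap.bilinLeftCLM (ContinuousLinearMap.mul ℝ ℂ) (chirp_temperate u) a with hhdef
  have hh : ∀ x : ℝ, h x = a x * chirp u x := fun _ ↦ rfl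
  have hnorm_h : ∀ x : ℝ, ‖h x‖ = ‖a x‖ := by
    intro x; rw [hh, norm_mul, chirp_norm, mul_one]
  have inner_eq : ∀ y : ℝ,
      (∫ τ : ℝ, Complex.exp (Complex.I * ((dqW * γ * τ^2 / 2 : ℝ) : ℂ)) * a (y - γ * τ))
      = |γ⁻¹| • (chirp u y * 𝓕 ⇑h (dqW / (2 * Real.pi * γ) * y)) := by
    intro y
    set w : ℝ := dqW / (2 * Real.pi * γ) * y with hwdef
    set G : ℝ → ℂ := fun x ↦
      Complex.exp (Complex.I * ((dqW * (y - x)^2 / (2*γ) : ℝ) : ℂ)) * a x with hGdef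
    have s1 : (∫ τ : ℝ, Complex.exp (Complex.I * ((dqW * γ * τ^2 / 2 : ℝ) : ℂ)) * a (y - γ * τ))
        = ∫ τ : ℝ, (fun s : ℝ ↦ G (y - s)) (γ * τ) := by
      congr 1; ext τ
      have h1 : y - (y - γ * τ) = γ * τ := by ring
      have h2 : dqW * (γ * τ)^2 / (2*γ) = dqW * γ * τ^2 / 2 := by
        field_simp
      simp only [hGdef, h1, h2]
    have s4 : ∀ x : ℝ, G x
        = chirp u y * (Complex.exp (((-2 * Real.pi * x * w : ℝ) : ℂ) * Complex.I) • h x) := by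
      intro x
      have hr : dqW * (y - x)^2 / (2*γ) = u * y^2 + (-2 * Real.pi * x * w) + u * x^2 := by
        rw [hudef, hwdef]
        field_simp
        ring
      have harg2 : Complex.I * ((dqW * (y - x)^2 / (2*γ) : ℝ) : ℂ)
          = Complex.I * ((u * y^2 : ℝ) : ℂ) + ((-2 * Real.pi * x * w : ℝ) : ℂ) * Complex.I
            + Complex.I * ((u * x^2 : ℝ) : ℂ) := by
        rw [hr]; push_cast; ring
      calc G x = Complex.exp (Complex.I * ((dqW * (y - x)^2 / (2*γ) : ℝ) : ℂ)) * a x := rfl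
        _ = Complex.exp (Complex.I * ((u * y^2 : ℝ) : ℂ))
              * Complex.exp (((-2 * Real.pi * x * w : ℝ) : ℂ) * Complex.I)
              * Complex.exp (Complex.I * ((u * x^2 : ℝ) : ℂ)) * a x := by
            rw [harg2, Complex.exp_add, Complex.exp_add]
        _ = chirp u y * (Complex.exp (((-2 * Real.pi * x * w : ℝ) : ℂ) * Complex.I) • h x) := by
            simp only [chirp, hh, smul_eq_mul]
            push_cast
            ring
    calc (∫ τ : ℝ, Complex.exp (Complex.I * ((dqW * γ * τ^2 / 2 : ℝ) : ℂ)) * a (y - γ * τ))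
        = ∫ τ : ℝ, (fun s : ℝ ↦ G (y - s)) (γ * τ) := s1
      _ = |γ⁻¹| • ∫ s : ℝ, G (y - s) :=
          MeasureTheory.Measure.integral_comp_mul_left (fun s : ℝ ↦ G (y - s)) γ
      _ = |γ⁻¹| • ∫ x : ℝ, G x := by rw [integral_sub_left_eq_self G volume y]
      _ = |γ⁻¹| • ∫ x : ℝ, chirp u y
            * (Complex.exp (((-2 * Real.pi * x * w : ℝ) : ℂ) * Complex.I) • h x) := by
          congr 1; exact integral_congr_ae (Filter.Eventually.of_forall s4)
      _ = |γ⁻¹| • (chirp u y * ∫ x : ℝ,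
            Complex.exp (((-2 * Real.pi * x * w : ℝ) : ℂ) * Complex.I) • h x) := by
          rw [integral_const_mul]
      _ = |γ⁻¹| • (chirp u y * 𝓕 ⇑h w) := by
          rw [← Real.fourier_real_eq_integral_exp_smul]
  -- outer computation
  have step2 : (∫ y : ℝ,
        ‖((dqW : ℂ) * κ) *
            ∫ τ : ℝ, Complex.exp (Complex.I * ((dqW * γ * τ^2 / 2 : ℝ) : ℂ)) *
              a (y - γ * τ)‖^2)
      = ∫ y : ℝ, (dqW^2 * ‖κ‖^2 / γ^2) *
          ‖𝓕 ⇑h (dqW / (2 * Real.pi * γ) * y)‖^2 := by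
    congr 1; ext y
    rw [inner_eq y]
    simp only [norm_mul, norm_smul, chirp_norm, one_mul, Complex.norm_real,
      Real.norm_eq_abs, abs_abs, abs_inv]
    rw [abs_of_pos hβ, abs_of_pos hγ]
    field_simp
  rw [step2, integral_const_mul,
    show (fun y : ℝ ↦ ‖𝓕 ⇑h (dqW / (2 * Real.pi * γ) * y)‖^2)
      = fun y : ℝ ↦ (fun t : ℝ ↦ ‖𝓕 ⇑h t‖^2) ((dqW / (2 * Real.pi * γ)) * y) from rfl,
    MeasureTheory.Measure.integral_comp_mul_left (fun t : ℝ ↦ ‖𝓕 ⇑h t‖^2)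
      (dqW / (2 * Real.pi * γ)), plancherel_schwartz h,
    show (∫ x : ℝ, ‖h x‖^2) = ∫ x : ℝ, ‖a x‖^2 by congr 1; ext x; rw [hnorm_h]]
  rw [smul_eq_mul, abs_inv, abs_div, abs_of_pos hβ, abs_of_pos (by positivity : (0:ℝ) < 2*Real.pi*γ)]
  rw [abs_of_pos hγ]
  field_simp
end

section
/- Let f ∈ 𝒮(ℝ), χ ∈ L²_per with ‖χ‖_{L²[0,1]} = 1, and define ψ^ε(x) := ε^{−1/4} f((x − q)/√ε) χ(x/ε) for given q ∈ ℝ. Then ‖ψ^ε‖²_{L²(ℝ)} → ‖f‖²_{L²(ℝ)} · ‖χ‖²_{L²[0,1]} = ‖f‖²_{L²} as ε ↓ 0; more precisely, if χ ∈ L^∞, |‖ψ^ε‖²_{L²} − ‖f‖²_{L²}‖χ‖²_{L²[0,1]}| = o(1). -/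
/-! Substituting `x = q + √ε y` turns `‖ψ^ε‖²` into `∫ |f y|² p (q/ε + y/√ε) dy` with `p = |χ|²`,
a weight of period `δ = √ε`. For a bounded `δ`-periodic weight `P`, averaging
`∫ g(y) P(y + s) dy` over `s ∈ (0, δ]` gives `(mean P) ∫ g` by Fubini, so `∫ g P` differs from
`(mean P) ∫ g` by at most `sup |P| · sup_{0 < s ≤ δ} ‖g - g(· - s)‖₁`. For `g = |f|²` with `f`
Schwartz this translation modulus is `O(δ)`, so the error is `O(√ε)`. -/

open MeasureTheory Filter Topology Set

theorem integral_norm_sub_comp_sub_le {E : Type*} [NormedAddCommGroup E] [NormedSpace ℝ E]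
    [CompleteSpace E] {f f' : ℝ → E} (hf : ∀ x, HasDerivAt f (f' x) x) (hf' : Integrable f')
    {s : ℝ} (hs : 0 ≤ s) :
    ∫ y, ‖f y - f (y - s)‖ ≤ s * ∫ y, ‖f' y‖ := by
  have hprod : Integrable (fun z : ℝ × ℝ => ‖f' (z.1 - z.2)‖)
      (volume.prod (volume.restrict (Ioc 0 s))) := by
    simpa using (integrable_const (1 : ℝ)).convolution_integrand
      (ContinuousLinearMap.mul ℝ ℝ) hf'.norm
  have hpoint : ∀ y, ‖f y - f (y - s)‖ ≤ ∫ u in Ioc 0 s, ‖f' (y - u)‖ := fun y => by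
    have hftc : ∫ u in 0..s, f' (y - u) = f y - f (y - s) := by
      rw [intervalIntegral.integral_comp_sub_left, sub_zero,
        intervalIntegral.integral_eq_sub_of_hasDerivAt (fun x _ => hf x) hf'.intervalIntegrable]
    rw [← hftc, ← intervalIntegral.integral_of_le hs]
    exact intervalIntegral.norm_integral_le_integral_norm hs
  calc ∫ y, ‖f y - f (y - s)‖ ≤ ∫ y, ∫ u in Ioc 0 s, ‖f' (y - u)‖ :=
        integral_mono_of_nonneg (Eventually.of_forall fun _ => norm_nonneg _)
          hprod.integral_prod_left (Eventually.of_forall hpoint)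
    _ = ∫ u in Ioc 0 s, ∫ y, ‖f' (y - u)‖ := integral_integral_swap hprod
    _ = s * ∫ y, ‖f' y‖ := by
        simp [integral_sub_right_eq_self (fun y => ‖f' y‖), hs]

theorem integral_abs_sq_norm_sub_comp_sub_le {E : Type*} [NormedAddCommGroup E]
    [NormedSpace ℝ E] [CompleteSpace E] {f f' : ℝ → E} (hf : ∀ x, HasDerivAt f (f' x) x)
    (hf' : Integrable f') (hfi : Integrable f) {M : ℝ} (hM : ∀ x, ‖f x‖ ≤ M)
    {s : ℝ} (hs : 0 ≤ s) :
    ∫ y, |‖f y‖ ^ 2 - ‖f (y - s)‖ ^ 2| ≤ 2 * M * (s * ∫ y, ‖f' y‖) := by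
  have hpoint : ∀ y, |‖f y‖ ^ 2 - ‖f (y - s)‖ ^ 2| ≤ 2 * M * ‖f y - f (y - s)‖ := fun y => by
    rw [sq_sub_sq, abs_mul, abs_of_nonneg (by positivity : 0 ≤ ‖f y‖ + ‖f (y - s)‖)]
    exact mul_le_mul (by linarith [hM y, hM (y - s)]) (abs_norm_sub_norm_le _ _)
      (abs_nonneg _) (by linarith [norm_nonneg (f 0), hM 0])
  calc ∫ y, |‖f y‖ ^ 2 - ‖f (y - s)‖ ^ 2| ≤ ∫ y, 2 * M * ‖f y - f (y - s)‖ :=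
        integral_mono_of_nonneg (Eventually.of_forall fun _ => abs_nonneg _)
          ((hfi.sub (hfi.comp_sub_right s)).norm.const_mul _) (Eventually.of_forall hpoint)
    _ ≤ 2 * M * (s * ∫ y, ‖f' y‖) := by
        rw [integral_const_mul]
        exact mul_le_mul_of_nonneg_left (integral_norm_sub_comp_sub_le hf hf' hs)
          (by linarith [norm_nonneg (f 0), hM 0])

theorem integrable_mul_comp_add_prod {g P : ℝ → ℝ} {C : ℝ} (hg : Integrable g)
    (hPm : Measurable P) (hPC : ∀ y, |P y| ≤ C) (T : ℝ) :
    Integrable (fun z : ℝ × ℝ => g z.2 * P (z.2 + z.1))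
      ((volume.restrict (Ioc 0 T)).prod volume) := by
  refine ((hg.comp_snd (volume.restrict (Ioc 0 T))).norm.const_mul C).mono' ?_
    (Eventually.of_forall fun z => ?_)
  · exact hg.aestronglyMeasurable.comp_snd.mul
      (hPm.comp (measurable_snd.add measurable_fst)).aestronglyMeasurable
  · rw [norm_mul, Real.norm_eq_abs (P _), mul_comm]
    exact mul_le_mul_of_nonneg_right (hPC _) (norm_nonneg _)

theorem integral_comp_sub_mul_eq_integral_mul_comp_add (g P : ℝ → ℝ) (s : ℝ) :
    ∫ y, g (y - s) * P y = ∫ y, g y * P (y + s) := by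
  simpa using integral_sub_right_eq_self (fun y => g y * P (y + s)) s

theorem Function.Periodic.setIntegral_Ioc_integral_comp_sub_mul {g P : ℝ → ℝ} {T C : ℝ}
    (hP : Function.Periodic P T) (hT : 0 ≤ T) (hg : Integrable g) (hPm : Measurable P)
    (hPC : ∀ y, |P y| ≤ C) :
    ∫ s in Ioc 0 T, ∫ y, g (y - s) * P y = (∫ s in 0..T, P s) * ∫ y, g y := by
  simp_rw [integral_comp_sub_mul_eq_integral_mul_comp_add g P]
  rw [integral_integral_swap (integrable_mul_comp_add_prod hg hPm hPC T),
    ← integral_const_mul]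
  refine integral_congr_ae (Eventually.of_forall fun y => ?_)
  have hperiod : ∫ s in 0..T, P (y + s) = ∫ s in 0..T, P s := by
    rw [intervalIntegral.integral_comp_add_left, add_zero, hP.intervalIntegral_add_eq y 0,
      zero_add]
  change ∫ s in Ioc 0 T, g y * P (y + s) = (∫ s in 0..T, P s) * g y
  rw [integral_const_mul, ← intervalIntegral.integral_of_le hT, hperiod, mul_comm]

theorem abs_integral_mul_periodic_sub_le {g P : ℝ → ℝ} {T C η m : ℝ} (hT : 0 < T)
    (hg : Integrable g) (hPm : Measurable P) (hPC : ∀ y, |P y| ≤ C)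
    (hP : Function.Periodic P T) (hmean : ∫ s in 0..T, P s = T * m)
    (hη : ∀ s ∈ Ioc 0 T, ∫ y, |g y - g (y - s)| ≤ η) :
    |(∫ y, g y * P y) - m * ∫ y, g y| ≤ C * η := by
  have hC : 0 ≤ C := (abs_nonneg _).trans (hPC 0)
  have hPbdd : ∀ᵐ y ∂volume, ‖P y‖ ≤ C := Eventually.of_forall hPC
  have hid : T * ((∫ y, g y * P y) - m * ∫ y, g y)
      = ∫ s in Ioc 0 T, ∫ y, (g y - g (y - s)) * P y := by
    have hint : IntegrableOn (fun s => ∫ y, g (y - s) * P y) (Ioc 0 T) := by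
      simpa only [IntegrableOn, integral_comp_sub_mul_eq_integral_mul_comp_add g P]
        using (integrable_mul_comp_add_prod hg hPm hPC T).integral_prod_left
    simp_rw [sub_mul]
    rw [integral_congr_ae (Eventually.of_forall fun s =>
        integral_sub (hg.mul_bdd hPm.aestronglyMeasurable hPbdd)
          ((hg.comp_sub_right s).mul_bdd hPm.aestronglyMeasurable hPbdd)),
      integral_sub (integrable_const _) hint,
      hP.setIntegral_Ioc_integral_comp_sub_mul hT.le hg hPm hPC, hmean, setIntegral_const,
      Real.volume_real_Ioc_of_le hT.le, sub_zero, smul_eq_mul]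
    ring
  have hbound : ∀ s ∈ Ioc 0 T, ‖∫ y, (g y - g (y - s)) * P y‖ ≤ C * η := fun s hs =>
    calc ‖∫ y, (g y - g (y - s)) * P y‖ ≤ ∫ y, C * |g y - g (y - s)| :=
          norm_integral_le_of_norm_le ((hg.sub (hg.comp_sub_right s)).abs.const_mul C)
            (Eventually.of_forall fun y => by
              rw [norm_mul, Real.norm_eq_abs, Real.norm_eq_abs, mul_comm]
              exact mul_le_mul_of_nonneg_right (hPC y) (abs_nonneg _))
      _ ≤ C * η := by
          rw [integral_const_mul]
          exact mul_le_mul_of_nonneg_left (hη s hs) hC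
  have := norm_setIntegral_le_of_norm_le_const (μ := volume) measure_Ioc_lt_top hbound
  rw [← hid, Real.volume_real_Ioc_of_le hT.le, sub_zero, norm_mul, Real.norm_of_nonneg hT.le,
    Real.norm_eq_abs, mul_comm (C * η)] at this
  exact le_of_mul_le_mul_left this hT

theorem Function.Periodic.comp_add_div {p : ℝ → ℝ} (hp : Function.Periodic p 1) (a : ℝ)
    {δ : ℝ} (hδ : δ ≠ 0) : Function.Periodic (fun y => p (a + y / δ)) δ := fun y => by
  simp only [add_div, div_self hδ, ← add_assoc, hp _]

theorem Function.Periodic.intervalIntegral_comp_add_div {p : ℝ → ℝ}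
    (hp : Function.Periodic p 1) (a : ℝ) {δ : ℝ} (hδ : δ ≠ 0) :
    ∫ y in 0..δ, p (a + y / δ) = δ * ∫ z in 0..1, p z := by
  rw [intervalIntegral.integral_comp_div (fun z => p (a + z)) hδ, zero_div, div_self hδ,
    intervalIntegral.integral_comp_add_left, add_zero, hp.intervalIntegral_add_eq a 0, zero_add,
    smul_eq_mul]

theorem abs_integral_sq_norm_mul_comp_add_div_sub_le {E : Type*} [NormedAddCommGroup E]
    [NormedSpace ℝ E] [CompleteSpace E] {f f' : ℝ → E} (hf : ∀ x, HasDerivAt f (f' x) x)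
    (hf' : Integrable f') (hfi : Integrable f) {M : ℝ} (hM : ∀ x, ‖f x‖ ≤ M)
    {p : ℝ → ℝ} (hpm : Measurable p) {C : ℝ} (hpC : ∀ z, |p z| ≤ C)
    (hp : Function.Periodic p 1) (a : ℝ) {δ : ℝ} (hδ : 0 < δ) :
    |(∫ y, ‖f y‖ ^ 2 * p (a + y / δ)) - (∫ z in 0..1, p z) * ∫ y, ‖f y‖ ^ 2|
      ≤ C * (2 * M * (δ * ∫ y, ‖f' y‖)) := by
  have hM0 : 0 ≤ M := (norm_nonneg _).trans (hM 0)
  have hsq : Integrable (fun y => ‖f y‖ ^ 2) := by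
    simpa only [sq] using hfi.norm.mul_bdd hfi.norm.aestronglyMeasurable
      (Eventually.of_forall fun y => by simpa using hM y)
  refine abs_integral_mul_periodic_sub_le hδ hsq
    (hpm.comp (measurable_const.add (measurable_id.div_const δ))) (fun y => hpC _)
    (hp.comp_add_div a hδ.ne') (hp.intervalIntegral_comp_add_div a hδ.ne') fun s hs => ?_
  refine (integral_abs_sq_norm_sub_comp_sub_le hf hf' hfi hM hs.1.le).trans ?_
  gcongr
  exact hs.2

theorem integral_sq_norm_wavepacket_eq (f χ : ℝ → ℂ) (q : ℝ) {ε : ℝ} (hε : 0 < ε) :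
    ∫ x : ℝ, ‖((ε ^ (-(1/4 : ℝ)) : ℝ) : ℂ) * (f ((x - q) / Real.sqrt ε) * χ (x / ε))‖^2
      = ∫ y, ‖f y‖ ^ 2 * ‖χ (q / ε + y / Real.sqrt ε)‖ ^ 2 := by
  set δ := Real.sqrt ε
  have hδ : 0 < δ := Real.sqrt_pos.mpr hε
  have hδε : δ ^ 2 = ε := Real.sq_sqrt hε.le
  have hscale : ((ε ^ (-(1/4 : ℝ)) : ℝ)) ^ 2 * δ = 1 := by
    rw [← Real.rpow_natCast, ← Real.rpow_mul hε.le,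
      show δ = ε ^ (1 / 2 : ℝ) from Real.sqrt_eq_rpow ε, ← Real.rpow_add hε]
    norm_num
  set G : ℝ → ℝ := fun x =>
    ‖((ε ^ (-(1/4 : ℝ)) : ℝ) : ℂ) * (f ((x - q) / δ) * χ (x / ε))‖ ^ 2
  have hsubst := Measure.integral_comp_mul_left (fun x => G (q + x)) δ
  rw [integral_add_left_eq_self G q, abs_inv, abs_of_pos hδ, smul_eq_mul] at hsubst
  rw [eq_inv_mul_iff_mul_eq₀ hδ.ne'] at hsubst
  rw [← hsubst, ← integral_const_mul]
  refine integral_congr_ae (Eventually.of_forall fun y => ?_)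
  have hy : (q + δ * y - q) / δ = y := by field_simp; ring
  have hx : (q + δ * y) / ε = q / ε + y / δ := by rw [← hδε]; field_simp
  simp only [G, hy, hx, norm_mul, Complex.norm_real, Real.norm_eq_abs, mul_pow, sq_abs]
  linear_combination (‖f y‖ ^ 2 * ‖χ (q / ε + y / δ)‖ ^ 2) * hscale

theorem wavepacket_norm_two_scale_general
    (f : SchwartzMap ℝ ℂ) (χ : ℝ → ℂ) (q : ℝ)
    (hmeas : Measurable χ)
    (hper : ∀ z, χ (z + 1) = χ z)
    (hbdd : ∃ C : ℝ, ∀ z, ‖χ z‖ ≤ C) :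
    Tendsto (fun ε : ℝ =>
        ∫ x : ℝ, ‖((ε ^ (-(1/4 : ℝ)) : ℝ) : ℂ) * (f ((x - q) / Real.sqrt ε) * χ (x / ε))‖^2)
      (𝓝[>] (0:ℝ))
      (𝓝 ((∫ x : ℝ, ‖f x‖^2) * ∫ z in (0:ℝ)..1, ‖χ z‖^2)) := by
  obtain ⟨C, hC⟩ := hbdd
  set M := ‖f.toBoundedContinuousFunction‖
  have hM : ∀ x, ‖f x‖ ≤ M := fun x => by
    simpa using f.toBoundedContinuousFunction.norm_coe_le_norm x
  have hf' : Integrable (deriv f) := by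
    rw [← funext (SchwartzMap.derivCLM_apply ℝ f)]
    exact (SchwartzMap.derivCLM ℝ ℂ f).integrable
  have hχC : ∀ z, |‖χ z‖ ^ 2| ≤ C ^ 2 := fun z => by
    rw [abs_of_nonneg (by positivity)]
    exact pow_le_pow_left₀ (norm_nonneg _) (hC z) 2
  have hrate : Tendsto (fun ε : ℝ => C ^ 2 * (2 * M * (Real.sqrt ε * ∫ y, ‖deriv f y‖)))
      (𝓝[>] 0) (𝓝 0) := by
    have hsqrt : Tendsto Real.sqrt (𝓝[>] 0) (𝓝 0) := by
      simpa using (Real.continuous_sqrt.tendsto 0).mono_left nhdsWithin_le_nhds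
    simpa using ((hsqrt.mul_const _).const_mul _).const_mul _
  refine tendsto_sub_nhds_zero_iff.mp (squeeze_zero_norm' ?_ hrate)
  filter_upwards [self_mem_nhdsWithin] with ε hε
  rw [Real.norm_eq_abs, integral_sq_norm_wavepacket_eq _ _ _ hε, mul_comm (∫ x : ℝ, ‖f x‖^2)]
  exact abs_integral_sq_norm_mul_comp_add_div_sub_le (fun x => f.differentiableAt.hasDerivAt)
    hf' f.integrable hM (hmeas.norm.pow_const 2) hχC (fun z => by simp only [hper]) (q / ε)
    (Real.sqrt_pos.mpr hε)

/-- two-scale averaging lemma for Bloch wavepackets. For Schwartz `f`,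
1-periodic bounded `χ` with `‖χ‖_{L²[0,1]} = 1`, and
`ψ^ε(x) = ε^{−1/4} f((x−q)/√ε) χ(x/ε)`, the squared `L²(ℝ)` norm of `ψ^ε` converges to
`‖f‖²_{L²(ℝ)} ‖χ‖²_{L²[0,1]} = ‖f‖²_{L²(ℝ)}` as `ε ↓ 0`. -/
theorem wavepacket_norm_two_scale
    (f : SchwartzMap ℝ ℂ) (χ : ℝ → ℂ) (q : ℝ)
    (hmeas : Measurable χ)
    (hper : ∀ z, χ (z + 1) = χ z)
    (hbdd : ∃ C : ℝ, ∀ z, ‖χ z‖ ≤ C)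
    (hnorm : (∫ z in (0:ℝ)..1, ‖χ z‖^2) = 1) :
    Tendsto (fun ε : ℝ =>
        ∫ x : ℝ, ‖((ε ^ (-(1/4 : ℝ)) : ℝ) : ℂ) * (f ((x - q) / Real.sqrt ε) * χ (x / ε))‖^2)
      (𝓝[>] (0:ℝ))
      (𝓝 ((∫ x : ℝ, ‖f x‖^2) * ∫ z in (0:ℝ)..1, ‖χ z‖^2)) :=
  wavepacket_norm_two_scale_general f χ q hmeas hper hbdd
end
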